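/- For every λ > 0 and every g ∈ P, the ℝ-linear map ψ : 𝔨 → 𝔤 defined by ψ(X) = g·φ_λ(X)·g⁻¹ satisfies: (i) ψ is injective and 𝔤 = ψ(𝔨) ⊕ 𝔭 as real vector spaces; (ii) ψ(X(0,z)) ∈ 𝔤⁻¹ for all z ∈ ℂ; (iii) the (1,0)-entry of ψ(J_λ(X(0,z))) equals i times the (1,0)-entry of ψ(X(0,z)) for all z ∈ ℂ; (iv) [ψ(X), ψ(Y)] - ψ([X,Y]) ∈ 𝔤¹ for all X, Y ∈ 𝔨, and [ψ(X), ψ(Y)] - ψ([X,Y]) = 0 whenever X, Y ∈ H_e. -/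

import Mathlib

open Matrix Complex

noncomputable section

/-- The 3×3 matrix J with J₀₂ = J₁₁ = J₂₀ = 1 and all other entries 0. -/
def Jm : Matrix (Fin 3) (Fin 3) ℂ := !![0,0,1;0,1,0;1,0,0]

/-- The real Lie algebra 𝔤 = su(2,1) = {A : Aᴴ·J + J·A = 0, tr A = 0}. -/
def su21 : Set (Matrix (Fin 3) (Fin 3) ℂ) :=
  {A | Aᴴ * Jm + Jm * A = 0 ∧ A.trace = 0}

/-- The real Lie algebra 𝔨 = su(2). -/
def su2 : Set (Matrix (Fin 2) (Fin 2) ℂ) :=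
  {X | Xᴴ = -X ∧ X.trace = 0}

/-- The element X(t,z) of su(2), with rows (i·t, -conj z) and (z, -i·t). -/
def Xk (t : ℝ) (z : ℂ) : Matrix (Fin 2) (Fin 2) ℂ :=
  !![Complex.I * t, -(starRingEnd ℂ) z; z, -(Complex.I * t)]

/-- The complex structure J_λ on H_e in terms of z = u+iv:
J_λ(X(0,u+iv)) = X(0, -(1/λ)·v + i·λ·u), so `Jl l z` is the new complex parameter. -/
def Jl (l : ℝ) (z : ℂ) : ℂ := ((-(z.im) / l : ℝ) : ℂ) + Complex.I * ((l * z.re : ℝ) : ℂ)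

/-- The matrix φ_λ(X(t,u+iv)) from Theorem 3.3 of the paper. -/
def phiE (l t u v : ℝ) : Matrix (Fin 3) (Fin 3) ℂ :=
  !![(((1+l^2)/(4*l) : ℝ) : ℂ) * (Complex.I * t),
     -((((5-3*l^2)/(4*Real.sqrt l)) : ℝ) : ℂ) * u
       - ((((3-5*l^2)/(4*l*Real.sqrt l)) : ℝ) : ℂ) * (Complex.I * v),
     ((((-15+34*l^2-15*l^4)/(16*l^2)) : ℝ) : ℂ) * (Complex.I * t);
     ((Real.sqrt l : ℝ) : ℂ) * u + (((1/Real.sqrt l) : ℝ) : ℂ) * (Complex.I * v),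
     -((((1+l^2)/(2*l)) : ℝ) : ℂ) * (Complex.I * t),
     ((((5-3*l^2)/(4*Real.sqrt l)) : ℝ) : ℂ) * u
       - ((((3-5*l^2)/(4*l*Real.sqrt l)) : ℝ) : ℂ) * (Complex.I * v);
     Complex.I * t,
     -((Real.sqrt l : ℝ) : ℂ) * u + (((1/Real.sqrt l) : ℝ) : ℂ) * (Complex.I * v),
     (((1+l^2)/(4*l) : ℝ) : ℂ) * (Complex.I * t)]

/-- The ℝ-linear map φ_λ, written as a map on 2×2 matrices: for X ∈ su(2) we have
X = X(t,z) with t = (X₀₀).im and z = X₁₀, and φ_λ(X(t,u+iv)) = `phiE l t u v`. -/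
def phiMap (l : ℝ) (X : Matrix (Fin 2) (Fin 2) ℂ) : Matrix (Fin 3) (Fin 3) ℂ :=
  phiE l (X 0 0).im (X 1 0).re (X 1 0).im

/-- 𝔭 = {A ∈ 𝔤 : A₁₀ = A₂₀ = A₂₁ = 0}. -/
def pSub : Set (Matrix (Fin 3) (Fin 3) ℂ) :=
  {A ∈ su21 | A 1 0 = 0 ∧ A 2 0 = 0 ∧ A 2 1 = 0}

/-- 𝔤⁻¹ = {A ∈ 𝔤 : A₂₀ = 0}. -/
def film1 : Set (Matrix (Fin 3) (Fin 3) ℂ) := {A ∈ su21 | A 2 0 = 0}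

/-- 𝔤¹ = {A ∈ 𝔤 : A₀₀ = A₁₁ = A₂₂ = A₁₀ = A₂₀ = A₂₁ = 0}. -/
def fil1 : Set (Matrix (Fin 3) (Fin 3) ℂ) :=
  {A ∈ su21 | A 0 0 = 0 ∧ A 1 1 = 0 ∧ A 2 2 = 0 ∧ A 1 0 = 0 ∧ A 2 0 = 0 ∧ A 2 1 = 0}

def e0 : Fin 3 → ℂ := ![1, 0, 0]

/-- The parabolic P : the stabilizer in SU(2,1) of the line ℂ·e₀. -/
def Pgrp : Set (Matrix (Fin 3) (Fin 3) ℂ) :=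
  {g | gᴴ * Jm * g = Jm ∧ g.det = 1 ∧ ∃ c : ℂ, g.mulVec e0 = c • e0}

/-- The composition ψ = Ad(g) ∘ φ_λ. -/
def psiMap (l : ℝ) (g : Matrix (Fin 3) (Fin 3) ℂ) (X : Matrix (Fin 2) (Fin 2) ℂ) :
    Matrix (Fin 3) (Fin 3) ℂ :=
  g * phiMap l X * g⁻¹

/-!
Every `g ∈ P` is upper triangular, so `Ad g` preserves `su(2,1)` and every step
`𝔤ᵏ = {A | A i j = 0 whenever j - i < k}` of the grading filtration (`𝔭 = 𝔤⁰`), and on `𝔤ᵏ` the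
entries with `j - i = k` are only rescaled by diagonal entries of `g`. This reduces everything to
`g = 1`. There, the entries `(2,0) = i t` and `(1,0) = √λ u + i v / √λ` of `φ_λ(X(t, u + iv))`
determine `X` and are exactly the coordinates of `su(2,1)` modulo `𝔭`, which gives (i)–(iii).
The bracket defect `[φ X, φ Y] - φ [X, Y]` is bilinear, so (iv) is checked on a basis of `su(2)`.
-/

def bandFiltration (R : Type*) [Semiring R] (n : ℕ) (k : ℤ) :
    Submodule R (Matrix (Fin n) (Fin n) R) where
  carrier := {A | ∀ i j : Fin n, (j : ℤ) - i < k → A i j = 0}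
  add_mem' hA hB i j h := by simp [hA i j h, hB i j h]
  zero_mem' _ _ _ := rfl
  smul_mem' c A hA i j h := by simp [hA i j h]

section bandFiltration

variable {R : Type*} [Semiring R] {n : ℕ} {k m : ℤ} {A B : Matrix (Fin n) (Fin n) R}

theorem mem_bandFiltration_iff :
    A ∈ bandFiltration R n k ↔ ∀ i j : Fin n, (j : ℤ) - i < k → A i j = 0 := Iff.rfl

theorem mul_mem_bandFiltration (hA : A ∈ bandFiltration R n k) (hB : B ∈ bandFiltration R n m) :
    A * B ∈ bandFiltration R n (k + m) := by
  intro i j hij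
  refine (Matrix.mul_apply ..).trans <| Finset.sum_eq_zero fun a _ => ?_
  by_cases ha : (a : ℤ) - i < k
  · rw [hA i a ha, zero_mul]
  · rw [hB a j (by omega), mul_zero]

theorem mem_bandFiltration_zero_iff :
    A ∈ bandFiltration R n 0 ↔ A.BlockTriangular id := by
  simp only [mem_bandFiltration_iff, Matrix.BlockTriangular, id, sub_neg, Nat.cast_lt,
    Fin.val_fin_lt]

theorem inv_mem_bandFiltration_zero {K : Type*} [Field K] {g : Matrix (Fin n) (Fin n) K}
    (hg : g ∈ bandFiltration K n 0) : g⁻¹ ∈ bandFiltration K n 0 := by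
  by_cases hdet : IsUnit g.det
  · have := g.invertibleOfIsUnitDet hdet
    rw [mem_bandFiltration_zero_iff] at hg ⊢
    exact Matrix.blockTriangular_inv_of_blockTriangular hg
  · rw [Matrix.nonsing_inv_apply_not_isUnit g hdet]
    exact zero_mem _

theorem conj_mem_bandFiltration {g h : Matrix (Fin n) (Fin n) R}
    (hg : g ∈ bandFiltration R n 0) (hh : h ∈ bandFiltration R n 0)
    (hA : A ∈ bandFiltration R n k) : g * A * h ∈ bandFiltration R n k := by
  simpa using mul_mem_bandFiltration (mul_mem_bandFiltration hg hA) hh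

theorem mul_mul_apply_of_mem_bandFiltration {g h : Matrix (Fin n) (Fin n) R}
    (hg : g ∈ bandFiltration R n 0) (hh : h ∈ bandFiltration R n 0)
    (hA : A ∈ bandFiltration R n k) {i j : Fin n} (hij : (j : ℤ) - i = k) :
    (g * A * h) i j = g i i * A i j * h j j := by
  rw [Matrix.mul_apply, Finset.sum_eq_single j, Matrix.mul_apply, Finset.sum_eq_single i]
  · intro a _ hai
    rcases lt_or_gt_of_ne hai with ha | ha
    · rw [hg i a (by simp [ha]), zero_mul]
    · rw [hA a j (by rw [← hij]; push_cast [Fin.lt_def] at ha ⊢; omega), mul_zero]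
  · simp
  · intro b _ hbj
    rcases lt_or_gt_of_ne hbj with hb | hb
    · have hib : (b : ℤ) - i < 0 + k := by rw [← hij]; push_cast [Fin.lt_def] at hb ⊢; omega
      rw [mul_mem_bandFiltration hg hA i b hib, zero_mul]
    · rw [hh b j (by simp [hb]), mul_zero]
  · simp

end bandFiltration

def specialUnitaryLie {n : Type*} [Fintype n] [DecidableEq n] (J : Matrix n n ℂ) :
    Submodule ℝ (Matrix n n ℂ) where
  carrier := {A | Aᴴ * J + J * A = 0 ∧ A.trace = 0}
  add_mem' := by
    rintro A B ⟨hA, hA'⟩ ⟨hB, hB'⟩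
    refine ⟨?_, by simp [hA', hB']⟩
    rw [conjTranspose_add, Matrix.add_mul, Matrix.mul_add]
    linear_combination (norm := abel) hA + hB
  zero_mem' := by simp
  smul_mem' := by
    rintro c A ⟨hA, hA'⟩
    refine ⟨?_, by simp [hA']⟩
    rw [conjTranspose_smul, star_trivial, smul_mul, Matrix.mul_smul, ← smul_add, hA, smul_zero]

section specialUnitaryLie

variable {n : Type*} [Fintype n] [DecidableEq n] {J : Matrix n n ℂ}

theorem commutator_mem_specialUnitaryLie {A B : Matrix n n ℂ} (hA : A ∈ specialUnitaryLie J)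
    (hB : B ∈ specialUnitaryLie J) : A * B - B * A ∈ specialUnitaryLie J := by
  obtain ⟨hA, -⟩ := hA
  obtain ⟨hB, -⟩ := hB
  have hA' : Aᴴ * J = -(J * A) := eq_neg_of_add_eq_zero_left hA
  have hB' : Bᴴ * J = -(J * B) := eq_neg_of_add_eq_zero_left hB
  refine ⟨?_, by simp [Matrix.trace_mul_comm A B]⟩
  simp only [conjTranspose_sub, conjTranspose_mul, Matrix.sub_mul,
    Matrix.mul_sub, Matrix.mul_assoc, hA', hB']
  simp only [Matrix.mul_neg, ← Matrix.mul_assoc, hA', hB']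
  noncomm_ring

theorem conj_mem_specialUnitaryLie {g A : Matrix n n ℂ}
    (hJ : gᴴ * J * g = J) (hg : IsUnit g.det) (hA : A ∈ specialUnitaryLie J) :
    g * A * g⁻¹ ∈ specialUnitaryLie J := by
  obtain ⟨hA, hA'⟩ := hA
  have hgH : IsUnit gᴴ.det := by rw [det_conjTranspose]; exact hg.star
  have e1 : gᴴ * J = J * g⁻¹ := by
    simpa [Matrix.mul_assoc, mul_nonsing_inv _ hg] using congrArg (· * g⁻¹) hJ
  have e2 : J * g = (gᴴ)⁻¹ * J := by
    simpa [← Matrix.mul_assoc, nonsing_inv_mul _ hgH] using congrArg ((gᴴ)⁻¹ * ·) hJ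
  refine ⟨?_, by rw [trace_mul_cycle, nonsing_inv_mul _ hg, Matrix.one_mul, hA']⟩
  calc (g * A * g⁻¹)ᴴ * J + J * (g * A * g⁻¹)
      = (gᴴ)⁻¹ * (Aᴴ * J + J * A) * g⁻¹ := by
        simp only [conjTranspose_mul, conjTranspose_nonsing_inv, Matrix.mul_add, Matrix.add_mul,
          Matrix.mul_assoc, e1]
        simp only [← Matrix.mul_assoc, e2]
    _ = 0 := by rw [hA, Matrix.mul_zero, Matrix.zero_mul]

end specialUnitaryLie

section FinThree

variable {A g : Matrix (Fin 3) (Fin 3) ℂ}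

theorem mem_su21_iff : A ∈ su21 ↔ A ∈ specialUnitaryLie Jm := Iff.rfl

theorem mem_bandFiltration_zero_iff_fin_three :
    A ∈ bandFiltration ℂ 3 0 ↔ A 1 0 = 0 ∧ A 2 0 = 0 ∧ A 2 1 = 0 := by
  simp [mem_bandFiltration_iff, Fin.forall_fin_succ]

theorem mem_bandFiltration_neg_one_iff_fin_three :
    A ∈ bandFiltration ℂ 3 (-1) ↔ A 2 0 = 0 := by
  simp [mem_bandFiltration_iff, Fin.forall_fin_succ]

theorem mem_bandFiltration_one_iff_fin_three :
    A ∈ bandFiltration ℂ 3 1 ↔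
      A 0 0 = 0 ∧ A 1 1 = 0 ∧ A 2 2 = 0 ∧ A 1 0 = 0 ∧ A 2 0 = 0 ∧ A 2 1 = 0 := by
  simp [mem_bandFiltration_iff, Fin.forall_fin_succ]
  tauto

theorem mem_pSub_iff : A ∈ pSub ↔ A ∈ su21 ∧ A ∈ bandFiltration ℂ 3 0 := by
  rw [mem_bandFiltration_zero_iff_fin_three]; rfl

theorem mem_film1_iff : A ∈ film1 ↔ A ∈ su21 ∧ A ∈ bandFiltration ℂ 3 (-1) := by
  rw [mem_bandFiltration_neg_one_iff_fin_three]; rfl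

theorem mem_fil1_iff : A ∈ fil1 ↔ A ∈ su21 ∧ A ∈ bandFiltration ℂ 3 1 := by
  rw [mem_bandFiltration_one_iff_fin_three]; rfl

theorem re_apply_two_zero_of_mem_su21 (hA : A ∈ su21) : (A 2 0).re = 0 := by
  have h := congrFun₂ hA.1 0 0
  simp [Jm, Matrix.mul_apply, Fin.sum_univ_three, conjTranspose_apply, vecMul, dotProduct,
    Complex.ext_iff] at h
  linarith

theorem apply_two_one_of_mem_su21 (hA : A ∈ su21) : A 2 1 = -starRingEnd ℂ (A 1 0) := by
  have h := congrFun₂ hA.1 1 0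
  simp [Jm, Matrix.mul_apply, Fin.sum_univ_three, conjTranspose_apply, vecMul, dotProduct] at h
  have h' := congrArg (starRingEnd ℂ) h
  simp only [map_add, Complex.conj_conj, map_zero] at h'
  linear_combination h'

theorem mem_bandFiltration_zero_iff_of_mem_su21 (hA : A ∈ su21) :
    A ∈ bandFiltration ℂ 3 0 ↔ A 2 0 = 0 ∧ A 1 0 = 0 := by
  rw [mem_bandFiltration_zero_iff_fin_three, apply_two_one_of_mem_su21 hA]
  constructor
  · rintro ⟨h10, h20, -⟩; exact ⟨h20, h10⟩
  · rintro ⟨h20, h10⟩; simp [h10, h20]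

theorem mem_Pgrp_iff :
    g ∈ Pgrp ↔ gᴴ * Jm * g = Jm ∧ g.det = 1 ∧ g ∈ bandFiltration ℂ 3 0 := by
  rw [mem_bandFiltration_zero_iff_fin_three]
  refine and_congr_right fun hJ => and_congr_right fun hdet => ⟨?_, ?_⟩
  · rintro ⟨c, hc⟩
    have h10 : g 1 0 = 0 := by
      simpa [mulVec, dotProduct, e0, Fin.sum_univ_three] using congrFun hc 1
    have h20 : g 2 0 = 0 := by
      simpa [mulVec, dotProduct, e0, Fin.sum_univ_three] using congrFun hc 2
    have h00 : g 0 0 ≠ 0 := by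
      intro h
      simp [det_fin_three, h, h10, h20] at hdet
    have h01 := congrFun₂ hJ 0 1
    simp [Jm, Matrix.mul_apply, Fin.sum_univ_three, conjTranspose_apply, h10, h20] at h01
    exact ⟨h10, h20, h01.resolve_left h00⟩
  · rintro ⟨h10, h20, -⟩
    refine ⟨g 0 0, ?_⟩
    ext i
    fin_cases i <;> simp [mulVec, dotProduct, e0, Fin.sum_univ_three, h10, h20]

theorem inv_mem_Pgrp (hg : g ∈ Pgrp) : g⁻¹ ∈ Pgrp := by
  obtain ⟨hJ, hdet, htri⟩ := mem_Pgrp_iff.1 hg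
  have hu : IsUnit g.det := by rw [hdet]; exact isUnit_one
  refine mem_Pgrp_iff.2 ⟨?_, by simp [det_nonsing_inv, hdet], inv_mem_bandFiltration_zero htri⟩
  calc g⁻¹ᴴ * Jm * g⁻¹ = g⁻¹ᴴ * (gᴴ * Jm * g) * g⁻¹ := by rw [hJ]
    _ = (g * g⁻¹)ᴴ * Jm * (g * g⁻¹) := by simp only [conjTranspose_mul, Matrix.mul_assoc]
    _ = Jm := by simp [mul_nonsing_inv _ hu]

end FinThree

section Conjugation

variable {g A : Matrix (Fin 3) (Fin 3) ℂ}

theorem isUnit_det_of_mem_Pgrp (hg : g ∈ Pgrp) : IsUnit g.det := by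
  rw [hg.2.1]; exact isUnit_one

theorem inv_conj_conj (hg : IsUnit g.det) : g⁻¹ * (g * A * g⁻¹) * g = A := by
  rw [Matrix.mul_assoc, Matrix.mul_assoc, nonsing_inv_mul _ hg, Matrix.mul_one,
    ← Matrix.mul_assoc, nonsing_inv_mul _ hg, Matrix.one_mul]

theorem conj_inv_conj (hg : IsUnit g.det) : g * (g⁻¹ * A * g) * g⁻¹ = A := by
  rw [Matrix.mul_assoc, Matrix.mul_assoc, mul_nonsing_inv _ hg, Matrix.mul_one,
    ← Matrix.mul_assoc, mul_nonsing_inv _ hg, Matrix.one_mul]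

theorem conj_mem_su21 (hg : g ∈ Pgrp) (hA : A ∈ su21) : g * A * g⁻¹ ∈ su21 :=
  conj_mem_specialUnitaryLie hg.1 (isUnit_det_of_mem_Pgrp hg) hA

theorem mem_bandFiltration_zero_of_mem_Pgrp (hg : g ∈ Pgrp) : g ∈ bandFiltration ℂ 3 0 :=
  (mem_Pgrp_iff.1 hg).2.2

theorem conj_mem_su21_and_bandFiltration {k : ℤ} (hg : g ∈ Pgrp)
    (hA : A ∈ su21 ∧ A ∈ bandFiltration ℂ 3 k) :
    g * A * g⁻¹ ∈ su21 ∧ g * A * g⁻¹ ∈ bandFiltration ℂ 3 k :=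
  ⟨conj_mem_su21 hg hA.1, conj_mem_bandFiltration (mem_bandFiltration_zero_of_mem_Pgrp hg)
    (mem_bandFiltration_zero_of_mem_Pgrp (inv_mem_Pgrp hg)) hA.2⟩

theorem conj_mem_pSub_iff (hg : g ∈ Pgrp) : g * A * g⁻¹ ∈ pSub ↔ A ∈ pSub := by
  simp only [mem_pSub_iff]
  refine ⟨fun h => ?_, conj_mem_su21_and_bandFiltration hg⟩
  have := conj_mem_su21_and_bandFiltration (inv_mem_Pgrp hg) h
  rwa [nonsing_inv_nonsing_inv _ (isUnit_det_of_mem_Pgrp hg),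
    inv_conj_conj (isUnit_det_of_mem_Pgrp hg)] at this

theorem conj_mem_film1 (hg : g ∈ Pgrp) (hA : A ∈ film1) : g * A * g⁻¹ ∈ film1 :=
  mem_film1_iff.2 (conj_mem_su21_and_bandFiltration hg (mem_film1_iff.1 hA))

theorem conj_mem_fil1 (hg : g ∈ Pgrp) (hA : A ∈ fil1) : g * A * g⁻¹ ∈ fil1 :=
  mem_fil1_iff.2 (conj_mem_su21_and_bandFiltration hg (mem_fil1_iff.1 hA))

end Conjugation

section SuTwo

theorem eq_Xk_of_mem_su2 {X : Matrix (Fin 2) (Fin 2) ℂ} (hX : X ∈ su2) :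
    X = Xk (X 0 0).im (X 1 0) := by
  obtain ⟨hskew, htr⟩ := hX
  have h00 := congrFun₂ hskew 0 0
  have h01 := congrFun₂ hskew 1 0
  have h11 : X 1 1 = -X 0 0 := by rw [trace_fin_two] at htr; linear_combination htr
  simp [conjTranspose_apply, Complex.ext_iff] at h00 h01
  ext i j
  fin_cases i <;> fin_cases j <;> simp [Xk, Complex.ext_iff, h11, h01]
  all_goals linarith

theorem Xk_inj {t t' : ℝ} {z z' : ℂ} : Xk t z = Xk t' z' ↔ t = t' ∧ z = z' := by
  refine ⟨fun h => ⟨?_, ?_⟩, fun ⟨ht, hz⟩ => ht ▸ hz ▸ rfl⟩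
  · simpa [Xk] using congrFun₂ h 0 0
  · simpa [Xk] using congrFun₂ h 1 0

theorem Xk_mem_su2 (t : ℝ) (z : ℂ) : Xk t z ∈ su2 := by
  constructor
  · ext i j
    fin_cases i <;> fin_cases j <;> simp [Xk, conjTranspose_apply]
  · simp [Xk, trace_fin_two]

theorem commutator_Xk (t t' : ℝ) (z z' : ℂ) :
    Xk t z * Xk t' z' - Xk t' z' * Xk t z =
      Xk (2 * (z'.re * z.im - z.re * z'.im)) (2 * I * (t' * z - t * z')) := by
  ext i j
  fin_cases i <;> fin_cases j <;>
    simp [Xk, Complex.ext_iff] <;> ring_nf <;> simp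

end SuTwo

/- The arguments of the third `φ` are the coordinates of `[X(t, u+iv), X(t', u'+iv')]`,
see `commutator_Xk`. -/
theorem commutator_sub_eq_of_basis {R A : Type*} [CommRing R] [Ring A] [Algebra R A]
    {φ : R → R → R → A} {T U V : A} (hφ : ∀ a b c, φ a b c = a • T + b • U + c • V)
    (t u v t' u' v' : R) :
    φ t u v * φ t' u' v' - φ t' u' v' * φ t u v
        - φ (2 * (u' * v - u * v')) (-2 * (t' * v - t * v')) (2 * (t' * u - t * u')) =
      (t * u' - u * t') • (T * U - U * T + (2 : R) • V)
        + (t * v' - v * t') • (T * V - V * T - (2 : R) • U)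
        + (u * v' - v * u') • (U * V - V * U + (2 : R) • T) := by
  simp only [hφ, add_mul, mul_add, smul_mul_smul_comm]
  module

def bracketDefect {M N : Type*} [Ring M] [Ring N] (f : M → N) (X Y : M) : N :=
  f X * f Y - f Y * f X - f (X * Y - Y * X)

theorem bracketDefect_conj {M N : Type*} [Ring M] [Ring N] {g g' : N} (hg : g' * g = 1)
    (f : M → N) (X Y : M) :
    bracketDefect (fun X => g * f X * g') X Y = g * bracketDefect f X Y * g' := by
  have conj_mul : ∀ A B : N, g * A * g' * (g * B * g') = g * (A * B) * g' := fun A B => by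
    simp only [mul_assoc, ← mul_assoc g' g, hg, one_mul]
  simp only [bracketDefect, conj_mul]
  noncomm_ring

section PhiE

variable {l : ℝ}

theorem phiE_eq_add (l t u v : ℝ) :
    phiE l t u v = t • phiE l 1 0 0 + u • phiE l 0 1 0 + v • phiE l 0 0 1 := by
  ext i j
  fin_cases i <;> fin_cases j <;> simp [phiE] <;> ring

theorem phiE_mem_su21 (l t u v : ℝ) : phiE l t u v ∈ su21 := by
  have basis : phiE l 1 0 0 ∈ su21 ∧ phiE l 0 1 0 ∈ su21 ∧ phiE l 0 0 1 ∈ su21 := by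
    refine ⟨⟨?_, ?_⟩, ⟨?_, ?_⟩, ⟨?_, ?_⟩⟩
    all_goals first
      | ext i j; fin_cases i <;> fin_cases j <;>
          simp [phiE, Jm, Matrix.mul_apply, Fin.sum_univ_three, conjTranspose_apply, map_ofNat]
      | simp [phiE, trace_fin_three] <;> ring
  rw [mem_su21_iff, phiE_eq_add]
  exact add_mem (add_mem (Submodule.smul_mem _ _ basis.1) (Submodule.smul_mem _ _ basis.2.1))
    (Submodule.smul_mem _ _ basis.2.2)

theorem exists_pos_eq_sq (hl : 0 < l) : ∃ s : ℝ, 0 < s ∧ l = s ^ 2 :=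
  ⟨√l, Real.sqrt_pos.2 hl, (Real.sq_sqrt hl.le).symm⟩

/- `phiE l 1 0 0`, `phiE l 0 1 0`, `phiE l 0 0 1` are the images of the basis `X(1,0)`, `X(0,1)`,
`X(0,i)` of `su(2)`, whose brackets are `-2 X(0,i)`, `2 X(0,1)` and `-2 X(1,0)`. -/
theorem phiE_commutator_u_v (hl : 0 < l) :
    phiE l 0 1 0 * phiE l 0 0 1 - phiE l 0 0 1 * phiE l 0 1 0 + (2 : ℝ) • phiE l 1 0 0 = 0 := by
  obtain ⟨s, hs, rfl⟩ := exists_pos_eq_sq hl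
  have hs' : (s : ℂ) ≠ 0 := by exact_mod_cast hs.ne'
  ext i j
  fin_cases i <;> fin_cases j <;>
    simp [phiE, Real.sqrt_sq hs.le] <;> field_simp <;> ring

theorem phiE_commutator_t_u (hl : 0 < l) :
    phiE l 1 0 0 * phiE l 0 1 0 - phiE l 0 1 0 * phiE l 1 0 0 + (2 : ℝ) • phiE l 0 0 1 ∈
      bandFiltration ℂ 3 1 := by
  obtain ⟨s, hs, rfl⟩ := exists_pos_eq_sq hl
  have hs' : (s : ℂ) ≠ 0 := by exact_mod_cast hs.ne'
  rw [mem_bandFiltration_one_iff_fin_three]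
  refine ⟨?_, ?_, ?_, ?_, ?_, ?_⟩ <;>
    simp [phiE, Real.sqrt_sq hs.le] <;> field_simp <;> ring

theorem phiE_commutator_t_v (hl : 0 < l) :
    phiE l 1 0 0 * phiE l 0 0 1 - phiE l 0 0 1 * phiE l 1 0 0 - (2 : ℝ) • phiE l 0 1 0 ∈
      bandFiltration ℂ 3 1 := by
  obtain ⟨s, hs, rfl⟩ := exists_pos_eq_sq hl
  have hs' : (s : ℂ) ≠ 0 := by exact_mod_cast hs.ne'
  rw [mem_bandFiltration_one_iff_fin_three]
  refine ⟨?_, ?_, ?_, ?_, ?_, ?_⟩ <;>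
    simp [phiE, Real.sqrt_sq hs.le] <;> field_simp <;> ring_nf <;> rw [I_sq] <;> ring

end PhiE

section PhiMap

variable {l : ℝ}

theorem phiMap_Xk (l t : ℝ) (z : ℂ) : phiMap l (Xk t z) = phiE l t z.re z.im := by
  simp [phiMap, Xk]

theorem phiMap_mem_su21 (l : ℝ) (X : Matrix (Fin 2) (Fin 2) ℂ) : phiMap l X ∈ su21 :=
  phiE_mem_su21 l _ _ _

theorem bracketDefect_phiMap_Xk (l t t' : ℝ) (z z' : ℂ) :
    bracketDefect (phiMap l) (Xk t z) (Xk t' z') =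
      (t * z'.re - z.re * t') •
          (phiE l 1 0 0 * phiE l 0 1 0 - phiE l 0 1 0 * phiE l 1 0 0 + (2 : ℝ) • phiE l 0 0 1)
        + (t * z'.im - z.im * t') •
          (phiE l 1 0 0 * phiE l 0 0 1 - phiE l 0 0 1 * phiE l 1 0 0 - (2 : ℝ) • phiE l 0 1 0)
        + (z.re * z'.im - z.im * z'.re) •
          (phiE l 0 1 0 * phiE l 0 0 1 - phiE l 0 0 1 * phiE l 0 1 0 + (2 : ℝ) • phiE l 1 0 0) := by
  have hre : (2 * I * (t' * z - t * z')).re = -2 * (t' * z.im - t * z'.im) := by simp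
  have him : (2 * I * (t' * z - t * z')).im = 2 * (t' * z.re - t * z'.re) := by simp
  rw [bracketDefect, commutator_Xk, phiMap_Xk, phiMap_Xk, phiMap_Xk, hre, him]
  exact commutator_sub_eq_of_basis (phiE_eq_add l) _ _ _ _ _ _

theorem bracketDefect_phiMap_mem (hl : 0 < l) {X Y : Matrix (Fin 2) (Fin 2) ℂ} (hX : X ∈ su2)
    (hY : Y ∈ su2) : bracketDefect (phiMap l) X Y ∈ fil1 := by
  refine mem_fil1_iff.2 ⟨?_, ?_⟩
  · exact sub_mem (commutator_mem_specialUnitaryLie (phiMap_mem_su21 l X) (phiMap_mem_su21 l Y))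
      (phiMap_mem_su21 l _)
  · rw [eq_Xk_of_mem_su2 hX, eq_Xk_of_mem_su2 hY, bracketDefect_phiMap_Xk, phiE_commutator_u_v hl,
      smul_zero, add_zero]
    exact add_mem (Submodule.smul_of_tower_mem _ _ (phiE_commutator_t_u hl))
      (Submodule.smul_of_tower_mem _ _ (phiE_commutator_t_v hl))

theorem bracketDefect_phiMap_Xk_zero (hl : 0 < l) (z z' : ℂ) :
    bracketDefect (phiMap l) (Xk 0 z) (Xk 0 z') = 0 := by
  simp [bracketDefect_phiMap_Xk, phiE_commutator_u_v hl]

theorem phiMap_apply_two_zero (l : ℝ) (X : Matrix (Fin 2) (Fin 2) ℂ) :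
    phiMap l X 2 0 = I * (X 0 0).im := by
  simp [phiMap, phiE]

theorem phiMap_apply_one_zero (l : ℝ) (X : Matrix (Fin 2) (Fin 2) ℂ) :
    phiMap l X 1 0 = √l * (X 1 0).re + I * ((X 1 0).im / √l) := by
  simp [phiMap, phiE]; ring

theorem phiMap_entries_eq_iff (hl : 0 < l) {B : Matrix (Fin 3) (Fin 3) ℂ} (hB : (B 2 0).re = 0)
    {X : Matrix (Fin 2) (Fin 2) ℂ} (hX : X ∈ su2) :
    (phiMap l X 2 0 = B 2 0 ∧ phiMap l X 1 0 = B 1 0) ↔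
      X = Xk (B 2 0).im ⟨(B 1 0).re / √l, √l * (B 1 0).im⟩ := by
  have hs : √l ≠ 0 := (Real.sqrt_pos.2 hl).ne'
  conv_rhs => rw [eq_Xk_of_mem_su2 hX, Xk_inj]
  rw [phiMap_apply_two_zero, phiMap_apply_one_zero]
  simp [Complex.ext_iff, hB]
  refine fun _ => and_congr ?_ ?_
  · rw [eq_div_iff hs, mul_comm]
  · rw [div_eq_iff hs, mul_comm]

theorem phiMap_injOn (hl : 0 < l) : Set.InjOn (phiMap l) su2 := by
  intro X hX Y hY h
  have hB : (phiMap l X 2 0).re = 0 := by simp [phiMap_apply_two_zero]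
  rw [(phiMap_entries_eq_iff hl hB hX).1 ⟨rfl, rfl⟩,
    (phiMap_entries_eq_iff hl hB hY).1 ⟨by rw [h], by rw [h]⟩]

theorem phiMap_Xk_Jl_apply_one_zero (hl : 0 < l) (z : ℂ) :
    phiMap l (Xk 0 (Jl l z)) 1 0 = I * phiMap l (Xk 0 z) 1 0 := by
  have hre : (Jl l z).re = -z.im / l := by simp [Jl]
  have him : (Jl l z).im = l * z.re := by simp [Jl]
  obtain ⟨s, hs, rfl⟩ := exists_pos_eq_sq hl
  have hs' : (s : ℂ) ≠ 0 := by exact_mod_cast hs.ne'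
  simp only [phiMap_apply_one_zero, Xk, of_apply, cons_val', cons_val_zero, cons_val_one, hre, him,
    Real.sqrt_sq hs.le]
  push_cast
  field_simp
  linear_combination (-(z.im : ℂ)) * I_sq

theorem phiMap_Xk_zero_mem_film1 (l : ℝ) (z : ℂ) : phiMap l (Xk 0 z) ∈ film1 :=
  mem_film1_iff.2 ⟨phiMap_mem_su21 l _,
    mem_bandFiltration_neg_one_iff_fin_three.2 (by simp [phiMap_apply_two_zero, Xk])⟩

end PhiMap

theorem existsUnique_add_of_existsUnique_sub_mem {α M : Type*} [AddCommGroup M] {f : α → M}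
    {S : Set M} {A : M} (h : ∃! x, A - f x ∈ S) : ∃! q : α × S, A = f q.1 + q.2 := by
  obtain ⟨x, hx, huniq⟩ := h
  refine ⟨(x, ⟨A - f x, hx⟩), (add_sub_cancel _ _).symm, ?_⟩
  rintro ⟨y, q⟩ (hq : A = f y + q)
  obtain rfl : y = x := huniq y (show A - f y ∈ S by rw [hq, add_sub_cancel_left]; exact q.2)
  ext
  · rfl
  · simp [hq]

section PsiMap

variable {l : ℝ} {g : Matrix (Fin 3) (Fin 3) ℂ}

theorem psiMap_injOn (hl : 0 < l) (hg : g ∈ Pgrp) : Set.InjOn (psiMap l g) su2 := by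
  intro X hX Y hY h
  refine phiMap_injOn hl hX hY ?_
  rw [← inv_conj_conj (isUnit_det_of_mem_Pgrp hg) (A := phiMap l X),
    ← inv_conj_conj (isUnit_det_of_mem_Pgrp hg) (A := phiMap l Y)]
  exact congrArg (fun M => g⁻¹ * M * g) h

theorem sub_psiMap_mem_pSub_iff (hl : 0 < l) (hg : g ∈ Pgrp) {A : Matrix (Fin 3) (Fin 3) ℂ}
    (hA : A ∈ su21) {X : Matrix (Fin 2) (Fin 2) ℂ} (hX : X ∈ su2) :
    A - psiMap l g X ∈ pSub ↔
      X = Xk ((g⁻¹ * A * g) 2 0).im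
        ⟨((g⁻¹ * A * g) 1 0).re / √l, √l * ((g⁻¹ * A * g) 1 0).im⟩ := by
  set B := g⁻¹ * A * g
  have hu := isUnit_det_of_mem_Pgrp hg
  have hB : B ∈ su21 := by
    simpa [nonsing_inv_nonsing_inv _ hu] using conj_mem_su21 (inv_mem_Pgrp hg) hA
  have hBX : B - phiMap l X ∈ su21 := sub_mem (mem_su21_iff.1 hB) (phiMap_mem_su21 l X)
  have hsub : A - psiMap l g X = g * (B - phiMap l X) * g⁻¹ := by
    rw [Matrix.mul_sub, Matrix.sub_mul, conj_inv_conj hu]; rfl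
  rw [hsub, conj_mem_pSub_iff hg, mem_pSub_iff, and_iff_right hBX,
    mem_bandFiltration_zero_iff_of_mem_su21 hBX,
    ← phiMap_entries_eq_iff hl (re_apply_two_zero_of_mem_su21 hB) hX]
  simp only [Matrix.sub_apply, sub_eq_zero]
  exact and_congr eq_comm eq_comm

theorem existsUnique_psiMap_add (hl : 0 < l) (hg : g ∈ Pgrp) {A : Matrix (Fin 3) (Fin 3) ℂ}
    (hA : A ∈ su21) : ∃! q : su2 × pSub, A = psiMap l g q.1 + q.2 :=
  existsUnique_add_of_existsUnique_sub_mem (f := fun X : su2 => psiMap l g X)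
    ⟨⟨_, Xk_mem_su2 _ _⟩, (sub_psiMap_mem_pSub_iff hl hg hA (Xk_mem_su2 _ _)).2 rfl,
      fun X hX => Subtype.ext ((sub_psiMap_mem_pSub_iff hl hg hA X.2).1 hX)⟩

theorem psiMap_Xk_zero_apply_one_zero (hg : g ∈ Pgrp) (z : ℂ) :
    psiMap l g (Xk 0 z) 1 0 = g 1 1 * phiMap l (Xk 0 z) 1 0 * g⁻¹ 0 0 :=
  mul_mul_apply_of_mem_bandFiltration (mem_bandFiltration_zero_of_mem_Pgrp hg)
    (mem_bandFiltration_zero_of_mem_Pgrp (inv_mem_Pgrp hg))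
    (mem_film1_iff.1 (phiMap_Xk_zero_mem_film1 l z)).2 (by norm_num)

end PsiMap

/-- for g ∈ P, the map ψ = Ad(g) ∘ φ_λ has the four properties of
Theorem 3.3 of the paper. -/
theorem stmt17 (l : ℝ) (hl : 0 < l) (g : Matrix (Fin 3) (Fin 3) ℂ) (hg : g ∈ Pgrp) :
    ((∀ X ∈ su2, ∀ Y ∈ su2, psiMap l g X = psiMap l g Y → X = Y) ∧
      (∀ A ∈ su21, ∃! q : su2 × pSub,
        A = psiMap l g (q.1 : Matrix (Fin 2) (Fin 2) ℂ) + (q.2 : Matrix (Fin 3) (Fin 3) ℂ))) ∧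
    (∀ z : ℂ, psiMap l g (Xk 0 z) ∈ film1) ∧
    (∀ z : ℂ,
      (psiMap l g (Xk 0 (Jl l z))) 1 0 = Complex.I * (psiMap l g (Xk 0 z)) 1 0) ∧
    (∀ X ∈ su2, ∀ Y ∈ su2,
      psiMap l g X * psiMap l g Y - psiMap l g Y * psiMap l g X
        - psiMap l g (X * Y - Y * X) ∈ fil1) ∧
    (∀ z z' : ℂ,
      psiMap l g (Xk 0 z) * psiMap l g (Xk 0 z')
        - psiMap l g (Xk 0 z') * psiMap l g (Xk 0 z)
        - psiMap l g (Xk 0 z * Xk 0 z' - Xk 0 z' * Xk 0 z) = 0) := by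
  have hdefect : ∀ X Y, bracketDefect (psiMap l g) X Y = g * bracketDefect (phiMap l) X Y * g⁻¹ :=
    bracketDefect_conj (nonsing_inv_mul g (isUnit_det_of_mem_Pgrp hg)) (phiMap l)
  refine ⟨⟨fun X hX Y hY => psiMap_injOn hl hg hX hY, fun A => existsUnique_psiMap_add hl hg⟩,
    fun z => conj_mem_film1 hg (phiMap_Xk_zero_mem_film1 l z), fun z => ?_,
    fun X hX Y hY => ?_, fun z z' => ?_⟩
  · rw [psiMap_Xk_zero_apply_one_zero hg, psiMap_Xk_zero_apply_one_zero hg,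
      phiMap_Xk_Jl_apply_one_zero hl]
    ring
  · show bracketDefect (psiMap l g) X Y ∈ fil1
    rw [hdefect]
    exact conj_mem_fil1 hg (bracketDefect_phiMap_mem hl hX hY)
  · show bracketDefect (psiMap l g) (Xk 0 z) (Xk 0 z') = 0
    rw [hdefect, bracketDefect_phiMap_Xk_zero hl, Matrix.mul_zero, Matrix.zero_mul]
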